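/- arXiv:2501.18849 — 2 statements merged into one kernel-verified Lean document; each statement's English description precedes it below -/
import Mathlib

section
/- Let n ≥ 1 be an integer and let μ : ℂⁿ → ℝ be the map μ(z) = π·‖z‖² where ‖z‖² = |z₁|² + ⋯ + |zₙ|². Then the pushforward of Lebesgue measure on ℂⁿ under μ equals the measure on ℝ with density t ↦ t^(n−1)/(n−1)! for t > 0 and density 0 for t ≤ 0, with respect to Lebesgue measure on ℝ. Equivalently, for every measurable function f : ℝ → [0,∞], ∫_{ℂⁿ} f(π‖z‖²) dvol(z) = ∫₀^∞ f(t)·t^(n−1)/(n−1)! dt. -/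
open MeasureTheory Real Set

lemma vol_moment_lt (n : ℕ) (hn : 1 ≤ n) (a : ℝ) (ha : 0 < a) :
    volume {z : Fin n → ℂ | π * ∑ j, ‖z j‖ ^ 2 < a}
      = ENNReal.ofReal (a ^ n / n.factorial) := by
  haveI : Nonempty (Fin n) := Fin.pos_iff_nonempty.mp hn
  have hπ : (0:ℝ) < π := pi_pos
  have haπ : 0 ≤ a / π := le_of_lt (div_pos ha hπ)
  have h := Complex.volume_sum_rpow_lt (ι := Fin n) (p := 2) one_le_two (Real.sqrt (a / π))
  have hset : {x : Fin n → ℂ | (∑ i, ‖x i‖ ^ (2:ℝ)) ^ (1/(2:ℝ)) < Real.sqrt (a / π)}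
      = {z : Fin n → ℂ | π * ∑ j, ‖z j‖ ^ 2 < a} := by
    ext z
    have hnn : (0:ℝ) ≤ ∑ j, ‖z j‖ ^ 2 :=
      Finset.sum_nonneg fun j _ => sq_nonneg _
    have : (∑ i, ‖z i‖ ^ (2:ℝ)) ^ (1/(2:ℝ)) = Real.sqrt (∑ j, ‖z j‖ ^ 2) := by
      rw [Real.sqrt_eq_rpow]
      congr 1
      refine Finset.sum_congr rfl fun j _ => ?_
      rw [Real.rpow_two]
    simp only [mem_setOf_eq, this]
    rw [Real.sqrt_lt_sqrt_iff hnn, lt_div_iff₀' hπ]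
  rw [hset] at h
  rw [h]
  have h2 : (2:ℝ) / 2 + 1 = 2 := by norm_num
  have h3 : 2 * (Fintype.card (Fin n) : ℝ) / 2 + 1 = (n : ℝ) + 1 := by
    simp [Fintype.card_fin]
  rw [h2, h3, Real.Gamma_two, mul_one, Real.Gamma_nat_eq_factorial, Fintype.card_fin,
    ← ENNReal.ofReal_pow (Real.sqrt_nonneg _), ← ENNReal.ofReal_mul (by positivity)]
  congr 1
  rw [pow_mul, Real.sq_sqrt haπ, div_pow]
  have hπn : (π:ℝ) ^ n ≠ 0 := by positivity
  field_simp

lemma vol_moment_lt' (n : ℕ) (hn : 1 ≤ n) (a : ℝ) :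
    volume {z : Fin n → ℂ | π * ∑ j, ‖z j‖ ^ 2 < a}
      = if 0 < a then ENNReal.ofReal (a ^ n / n.factorial) else 0 := by
  split_ifs with ha
  · exact vol_moment_lt n hn a ha
  · have : {z : Fin n → ℂ | π * ∑ j, ‖z j‖ ^ 2 < a} = ∅ := by
      ext z
      simp only [mem_setOf_eq, mem_empty_iff_false, iff_false, not_lt]
      have h1 : (0:ℝ) ≤ π * ∑ j, ‖z j‖ ^ 2 :=
        mul_nonneg pi_pos.le (Finset.sum_nonneg fun j _ => sq_nonneg _)
      linarith [not_lt.1 ha]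
    rw [this, measure_empty]

lemma density_Iio (n : ℕ) (hn : 1 ≤ n) (a : ℝ) :
    ∫⁻ t in Iio a,
        (if 0 < t then ENNReal.ofReal (t ^ (n - 1) / ((n - 1).factorial : ℝ)) else 0)
      = if 0 < a then ENNReal.ofReal (a ^ n / n.factorial) else 0 := by
  have hn' : n - 1 + 1 = n := Nat.succ_pred_eq_of_pos hn
  have hg : (fun t : ℝ => if 0 < t then
        ENNReal.ofReal (t ^ (n - 1) / ((n - 1).factorial : ℝ)) else 0)
      = (Ioi (0:ℝ)).indicator
          (fun t => ENNReal.ofReal (t ^ (n - 1) / ((n - 1).factorial : ℝ))) := by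
    funext t; simp [Set.indicator_apply]
  have step : ∫⁻ t in Iio a,
      (if 0 < t then ENNReal.ofReal (t ^ (n - 1) / ((n - 1).factorial : ℝ)) else 0)
      = ∫⁻ t in Iio a, (Ioi (0:ℝ)).indicator
          (fun t => ENNReal.ofReal (t ^ (n - 1) / ((n - 1).factorial : ℝ))) t :=
    lintegral_congr fun t => by simp [Set.indicator_apply]
  rw [step, lintegral_indicator measurableSet_Ioi _,
    Measure.restrict_restrict measurableSet_Ioi, Set.Ioi_inter_Iio]
  by_cases ha : 0 < a
  · rw [if_pos ha]
    have hInt : IntegrableOn (fun t : ℝ => t ^ (n - 1) / ((n - 1).factorial : ℝ))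
        (Ioo 0 a) volume := by
      refine (((intervalIntegral.intervalIntegrable_pow (n - 1)
        (a := 0) (b := a)).div_const _).1).mono_set Ioo_subset_Ioc_self
    have hnn : 0 ≤ᵐ[volume.restrict (Ioo 0 a)]
        fun t : ℝ => t ^ (n - 1) / ((n - 1).factorial : ℝ) := by
      filter_upwards [ae_restrict_mem measurableSet_Ioo] with t ht
      have := ht.1.le
      positivity
    rw [← ofReal_integral_eq_lintegral_ofReal hInt hnn]
    congr 1
    rw [← integral_Ioc_eq_integral_Ioo, ← intervalIntegral.integral_of_le ha.le,
      intervalIntegral.integral_div, integral_pow, hn']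
    have h4 : ((n - 1 : ℕ) : ℝ) + 1 = (n : ℝ) := by
      have := congrArg (fun k : ℕ => (k : ℝ)) hn'
      push_cast at this
      exact this
    have hfact : (n.factorial : ℝ) = (n : ℝ) * ((n - 1).factorial : ℝ) := by
      rw [← Nat.mul_factorial_pred (by omega : n ≠ 0)]
      push_cast
      ring
    rw [h4, hfact]
    have hn0 : (n : ℝ) ≠ 0 := by positivity
    have hf0 : ((n - 1).factorial : ℝ) ≠ 0 := by positivity
    field_simp
    rw [zero_pow (by omega), sub_zero]
  · rw [if_neg ha, Ioo_eq_empty ha, Measure.restrict_empty, lintegral_zero_measure]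


/-- Duistermaat–Heckman measure for the diagonal `S¹`-action on `ℂⁿ`:
the pushforward of Lebesgue measure under the moment map `μ(z) = π‖z‖²` has density
`t^{n−1}/(n−1)!` on `(0,∞)` and `0` on `(−∞,0]`; equivalently, for every measurable
`f : ℝ → [0,∞]`, `∫_{ℂⁿ} f(π‖z‖²) dvol = ∫₀^∞ f(t) t^{n−1}/(n−1)! dt`. -/
theorem pushforward_moment_map_Cn (n : ℕ) (hn : 1 ≤ n) :
    (Measure.map (fun z : Fin n → ℂ => π * ∑ j, ‖z j‖ ^ 2) volume
        = volume.withDensity fun t : ℝ =>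
            if 0 < t then ENNReal.ofReal (t ^ (n - 1) / (Nat.factorial (n - 1) : ℝ)) else 0)
    ∧ ∀ f : ℝ → ENNReal, Measurable f →
        ∫⁻ z : Fin n → ℂ, f (π * ∑ j, ‖z j‖ ^ 2)
          = ∫⁻ t in Set.Ioi (0 : ℝ),
              f t * ENNReal.ofReal (t ^ (n - 1) / (Nat.factorial (n - 1) : ℝ)) := by
  have hF : Measurable (fun z : Fin n → ℂ => π * ∑ j, ‖z j‖ ^ 2) := by
    exact (continuous_const.mul (continuous_finset_sum _ fun j _ =>
      (continuous_norm.comp (continuous_apply j)).pow 2)).measurable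
  have hg : Measurable (fun t : ℝ =>
      if 0 < t then ENNReal.ofReal (t ^ (n - 1) / (Nat.factorial (n - 1) : ℝ)) else 0) := by
    refine Measurable.ite ?_ (by fun_prop) measurable_const
    exact measurableSet_Ioi
  have hmap : Measure.map (fun z : Fin n → ℂ => π * ∑ j, ‖z j‖ ^ 2) volume
      = volume.withDensity fun t : ℝ =>
          if 0 < t then ENNReal.ofReal (t ^ (n - 1) / (Nat.factorial (n - 1) : ℝ)) else 0 := by
    refine Measure.ext_of_generateFrom_of_iUnion (range Iio) (fun k : ℕ => Iio (k : ℝ))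
      ?_ isPiSystem_Iio ?_ (fun k => mem_range_self _) ?_ ?_
    · rw [BorelSpace.measurable_eq (α := ℝ)]
      exact borel_eq_generateFrom_Iio ℝ
    · exact iUnion_eq_univ_iff.2 fun x => ⟨⌊x⌋₊ + 1, by push_cast; exact Nat.lt_floor_add_one x⟩
    · intro k
      rw [Measure.map_apply hF measurableSet_Iio]
      have : (fun z : Fin n → ℂ => π * ∑ j, ‖z j‖ ^ 2) ⁻¹' Iio (k : ℝ)
          = {z : Fin n → ℂ | π * ∑ j, ‖z j‖ ^ 2 < (k : ℝ)} := rfl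
      rw [this, vol_moment_lt' n hn]
      split_ifs <;> simp
    · rintro s ⟨a, rfl⟩
      rw [Measure.map_apply hF measurableSet_Iio]
      have : (fun z : Fin n → ℂ => π * ∑ j, ‖z j‖ ^ 2) ⁻¹' Iio a
          = {z : Fin n → ℂ | π * ∑ j, ‖z j‖ ^ 2 < a} := rfl
      rw [this, vol_moment_lt' n hn, withDensity_apply _ measurableSet_Iio,
        density_Iio n hn a]
  refine ⟨hmap, fun f hf => ?_⟩
  rw [← lintegral_map hf hF, hmap, lintegral_withDensity_eq_lintegral_mul _ hg hf]
  have step : ∫⁻ t : ℝ,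
      ((fun t : ℝ => if 0 < t then
          ENNReal.ofReal (t ^ (n - 1) / (Nat.factorial (n - 1) : ℝ)) else 0) * f) t
      = ∫⁻ t : ℝ, (Ioi (0:ℝ)).indicator
          (fun t => f t * ENNReal.ofReal (t ^ (n - 1) / (Nat.factorial (n - 1) : ℝ))) t := by
    refine lintegral_congr fun t => ?_
    by_cases ht : 0 < t <;>
      simp [Set.indicator_apply, ht, mem_Ioi, mul_comm]
  rw [step, lintegral_indicator measurableSet_Ioi _]
end

section
/- Let n ≥ 2 be an integer and ε > 0 a real number. For every t ∈ ℝ, (1/(2π)) · ∫_{−∞}^{∞} e^{(ε+is)t} · (ε+is)^(−n) ds equals t^(n−1)/(n−1)! if t > 0, and equals 0 if t ≤ 0. -/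
open MeasureTheory Real

open Set FourierTransform

lemma JK.integrableOn_real_pow_mul_exp {b : ℝ} (hb : 0 < b) (n : ℕ) :
    IntegrableOn (fun x : ℝ => x ^ n * Real.exp (-(b * x))) (Ioi (0:ℝ)) := by
  have hg : IntegrableOn (fun y : ℝ => Real.exp (-y) * y ^ ((n+1:ℝ) - 1)) (Ioi (0:ℝ)) :=
    Real.GammaIntegral_convergent (by positivity)
  have h2 : IntegrableOn (fun x : ℝ => Real.exp (-(b*x)) * (b*x) ^ ((n+1:ℝ) - 1)) (Ioi (0:ℝ)) := by
    have := (integrableOn_Ioi_comp_mul_left_iff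
      (fun y : ℝ => Real.exp (-y) * y ^ ((n+1:ℝ) - 1)) 0 hb).2 (by simpa using hg)
    simpa using this
  have h3 := h2.smul (b ^ n)⁻¹
  apply IntegrableOn.congr_fun h3 ?_ measurableSet_Ioi
  intro x hx
  have hx0 : (0:ℝ) < x := hx
  have : ((n+1:ℝ) - 1) = (n:ℝ) := by ring
  rw [this]
  simp only [Pi.smul_apply, smul_eq_mul, Real.rpow_natCast, mul_pow]
  field_simp

lemma JK.integrableOn_pow_mul_exp {c : ℂ} (hc : 0 < c.re) (n : ℕ) :
    IntegrableOn (fun x : ℝ => (x:ℂ)^n * Complex.exp (-(c * x))) (Ioi (0:ℝ)) := by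
  refine ((JK.integrableOn_real_pow_mul_exp hc n).mono' ?_ ?_)
  · exact (Continuous.aestronglyMeasurable (by fun_prop)).restrict
  · filter_upwards [ae_restrict_mem measurableSet_Ioi] with x hx
    have hx0 : (0:ℝ) < x := hx
    simp only [norm_mul, norm_pow, Complex.norm_real, Complex.norm_exp]
    rw [Real.norm_eq_abs]
    simp [abs_of_pos hx0, Complex.neg_re, Complex.mul_re]

lemma JK.tendsto_pow_mul_exp {b : ℝ} (hb : 0 < b) (n : ℕ) :
    Filter.Tendsto (fun x : ℝ => x ^ n * Real.exp (-(b * x))) Filter.atTop (nhds 0) := by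
  have h := (tendsto_pow_mul_exp_neg_atTop_nhds_zero n).comp
    (Filter.tendsto_id.const_mul_atTop hb)
  have h2 := h.const_mul ((b ^ n)⁻¹)
  rw [mul_zero] at h2
  refine h2.congr (fun x => ?_)
  have hbn : (b:ℝ)^n ≠ 0 := by positivity
  simp only [Function.comp_apply, id_eq, mul_pow]
  field_simp

lemma JK.tendsto_F {c : ℂ} (hc : 0 < c.re) (n : ℕ) :
    Filter.Tendsto (fun x : ℝ => -((x:ℂ) ^ n * Complex.exp (-(c * x))) / c)
      Filter.atTop (nhds 0) := by
  have hb : ∀ᶠ x : ℝ in Filter.atTop,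
      ‖-((x:ℂ) ^ n * Complex.exp (-(c * x))) / c‖ ≤ (x ^ n * Real.exp (-(c.re * x))) / ‖c‖ := by
    filter_upwards [Filter.eventually_ge_atTop (0:ℝ)] with x hx
    simp only [norm_div, norm_neg, norm_mul, norm_pow, Complex.norm_real,
      Complex.norm_exp, Real.norm_eq_abs]
    rw [_root_.abs_of_nonneg hx]
    apply le_of_eq
    congr 2
    simp [Complex.neg_re, Complex.mul_re]
  exact squeeze_zero_norm' hb (by simpa using (JK.tendsto_pow_mul_exp hc n).div_const ‖c‖)

lemma JK.hasDerivAt_F {c : ℂ} (n : ℕ) (x : ℝ) :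
    HasDerivAt (fun x : ℝ => -((x:ℂ) ^ n * Complex.exp (-(c * x))) / c)
      ((((n:ℂ) * (x:ℂ)^(n-1) * Complex.exp (-(c*x))
        + (x:ℂ)^n * (-c * Complex.exp (-(c*x))))) / (-c) ) x := by
  have h1 : HasDerivAt (fun x : ℝ => (x:ℂ) ^ n) ((n:ℂ) * (x:ℂ)^(n-1)) x := by
    simpa using (hasDerivAt_pow n (x:ℂ)).comp_ofReal
  have h2 : HasDerivAt (fun x : ℝ => Complex.exp (-(c * x))) (-c * Complex.exp (-(c*x))) x := by
    have : HasDerivAt (fun z : ℂ => Complex.exp (-(c * z))) (-c * Complex.exp (-(c*(x:ℂ)))) (x:ℂ) := by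
      have := ((hasDerivAt_id (x:ℂ)).const_mul c).neg.cexp
      simpa [mul_comm] using this
    exact this.comp_ofReal
  have := ((h1.mul h2).neg).div_const c
  convert this using 1
  · rfl
  · rfl
  · ring

lemma JK.integral_pow_mul_exp {c : ℂ} (hc : 0 < c.re) (n : ℕ) :
    ∫ x in Set.Ioi (0:ℝ), (x:ℂ)^n * Complex.exp (-(c * x)) = (n.factorial : ℂ) / c ^ (n+1) := by
  have hc0 : c ≠ 0 := fun h => by simp [h] at hc
  induction n with
  | zero =>
    have key := integral_Ioi_of_hasDerivAt_of_tendsto'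
      (f := fun x : ℝ => -((x:ℂ) ^ 0 * Complex.exp (-(c * x))) / c)
      (f' := fun x : ℝ => (x:ℂ)^0 * Complex.exp (-(c * x)))
      (a := (0:ℝ)) (m := 0)
      (fun x _ => by
        have := JK.hasDerivAt_F (c := c) 0 x
        convert this using 1
        · rfl
        field_simp
        simp)
      (by simpa using JK.integrableOn_pow_mul_exp hc 0)
      (JK.tendsto_F hc 0)
    rw [key]
    simp [hc0]
    ring_nf
  | succ n ih =>
    have key := integral_Ioi_of_hasDerivAt_of_tendsto'
      (f := fun x : ℝ => -((x:ℂ) ^ (n+1) * Complex.exp (-(c * x))) / c)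
      (f' := fun x : ℝ => (x:ℂ)^(n+1) * Complex.exp (-(c * x))
        - ((n:ℂ)+1)/c * ((x:ℂ)^n * Complex.exp (-(c * x))))
      (a := (0:ℝ)) (m := 0)
      (fun x _ => by
        have := JK.hasDerivAt_F (c := c) (n+1) x
        convert this using 1
        · rfl
        push_cast
        field_simp [hc0]
        ring)
      ((JK.integrableOn_pow_mul_exp hc (n+1)).sub
        ((JK.integrableOn_pow_mul_exp hc n).const_mul _))
      (JK.tendsto_F hc (n+1))
    rw [integral_sub (JK.integrableOn_pow_mul_exp hc (n+1))
      ((JK.integrableOn_pow_mul_exp hc n).const_mul _), integral_const_mul, ih] at key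
    have : (∫ x in Set.Ioi (0:ℝ), (x:ℂ)^(n+1) * Complex.exp (-(c * x)))
        = ((n:ℂ)+1)/c * ((n.factorial : ℂ) / c ^ (n+1)) := by
      have h0 : (0:ℂ) - (fun x : ℝ => -((x:ℂ) ^ (n+1) * Complex.exp (-(c * x))) / c) 0 = 0 := by
        simp
      rw [h0] at key
      linear_combination key
    rw [this, div_mul_div_comm, Nat.factorial_succ]
    have : c * c ^ (n+1) = c ^ (n+1+1) := (pow_succ' c (n+1)).symm
    rw [this]
    push_cast
    ring

/-- Inverse Fourier transform of the equivariant volume `λ^{−n}` of `ℂⁿ` along the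
contour `Re λ = ε > 0` (prototype of the Jeffrey–Kirwan residue): for `n ≥ 2`,
`(1/2π) ∫_ℝ e^{(ε+is)t} (ε+is)^{−n} ds` equals `t^{n−1}/(n−1)!` for `t > 0` and `0` for `t ≤ 0`. -/
theorem inverse_fourier_equivariant_volume (n : ℕ) (hn : 2 ≤ n) (ε : ℝ) (hε : 0 < ε) (t : ℝ) :
    (1 / (2 * (π : ℂ))) *
        ∫ s : ℝ, Complex.exp (((ε : ℂ) + (s : ℂ) * Complex.I) * (t : ℂ)) *
          ((ε : ℂ) + (s : ℂ) * Complex.I) ^ (-(n : ℤ))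
      = if 0 < t then (t : ℂ) ^ (n - 1) / (Nat.factorial (n - 1) : ℂ) else 0 := by
  classical
  set k : ℂ := ((n-1).factorial : ℂ) with hk
  have hk0 : k ≠ 0 := Nat.cast_ne_zero.2 (Nat.factorial_ne_zero _)
  have hn1 : n - 1 ≠ 0 := by omega
  set f : ℝ → ℂ := fun x => if 0 < x then (x:ℂ)^(n-1) * Complex.exp (-((ε:ℂ) * x)) / k else 0
    with hf
  -- continuity
  have hcont : Continuous f := by
    rw [hf]
    apply Continuous.if ?_ (by fun_prop) continuous_const
    intro a ha
    have : {x : ℝ | 0 < x} = Set.Ioi 0 := rfl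
    rw [show {x : ℝ | 0 < x} = Set.Ioi (0:ℝ) from rfl, frontier_Ioi] at ha
    simp only [Set.mem_singleton_iff] at ha
    subst ha
    simp [zero_pow hn1]
  -- integrability of f
  have hfeq : f = Set.indicator (Set.Ioi (0:ℝ))
      (fun x : ℝ => (x:ℂ)^(n-1) * Complex.exp (-((ε:ℂ) * x)) / k) := by
    funext x
    by_cases hx : 0 < x <;> simp [hf, Set.indicator, hx, Set.mem_Ioi]
  have hεre : 0 < ((ε:ℂ)).re := by simpa using hε
  have hfi : Integrable f := by
    rw [hfeq, integrable_indicator_iff measurableSet_Ioi]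
    exact (JK.integrableOn_pow_mul_exp hεre (n-1)).div_const k
  -- Fourier transform of f
  have hFf : ∀ ξ : ℝ, 𝓕 f ξ = (((ε:ℂ) + (2*π*ξ : ℝ) * Complex.I)^n)⁻¹ := by
    intro ξ
    set c : ℂ := (ε:ℂ) + (2*π*ξ : ℝ) * Complex.I with hc
    have hcre : 0 < c.re := by simp [hc, hε]
    have hc0 : c ≠ 0 := fun h => by simp [h] at hcre
    rw [Real.fourier_real_eq_integral_exp_smul]
    rw [← setIntegral_eq_integral_of_forall_compl_eq_zero (s := Set.Ioi (0:ℝ))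
      (fun x hx => by
        have : ¬ (0 < x) := by simpa using hx
        simp [hf, this])]
    have hcg : ∀ x ∈ Set.Ioi (0:ℝ),
        Complex.exp (↑(-2 * π * x * ξ) * Complex.I) • f x
          = ((x:ℂ)^(n-1) * Complex.exp (-(c * x))) / k := by
      intro x hx
      have hx' : 0 < x := hx
      simp only [hf, if_pos hx', smul_eq_mul]
      rw [mul_div_assoc', mul_comm (Complex.exp _), mul_assoc, ← Complex.exp_add]
      congr 2
      push_cast [hc]
      ring
    rw [setIntegral_congr_fun measurableSet_Ioi hcg, integral_div,
      JK.integral_pow_mul_exp hcre (n-1)]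
    rw [show n - 1 + 1 = n by omega]
    rw [show ((n-1).factorial : ℂ) = k from hk.symm]
    rw [div_div, mul_comm (c^n) k, ← div_div, div_self hk0, one_div]
  -- integrability of the Fourier transform
  have hGi : Integrable (fun ξ : ℝ => (((ε:ℂ) + (2*π*ξ : ℝ) * Complex.I)^n)⁻¹) := by
    have h1 : Integrable (fun ξ : ℝ => (ε^2 + (2*π*ξ)^2)⁻¹) := by
      have h2 : Integrable (fun ξ : ℝ => (1 + ((2*π/ε) * ξ)^2)⁻¹) :=
        integrable_inv_one_add_sq.comp_mul_left' (by positivity)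
      refine (h2.const_mul ((ε^2)⁻¹)).congr (Filter.Eventually.of_forall fun x => ?_)
      have hε2 : (ε:ℝ)^2 ≠ 0 := by positivity
      field_simp
    have hmeas : Continuous (fun ξ : ℝ => (((ε:ℂ) + (2*π*ξ : ℝ) * Complex.I)^n)⁻¹) := by
      apply Continuous.inv₀ (by fun_prop)
      intro ξ
      apply pow_ne_zero
      intro h
      have : ((ε:ℂ) + (2*π*ξ : ℝ) * Complex.I).re = ε := by simp
      rw [h] at this
      simp at this
      exact hε.ne' this.symm

    refine (h1.const_mul ((ε^(n-2))⁻¹)).mono' hmeas.aestronglyMeasurable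
      (Filter.Eventually.of_forall fun ξ => ?_)
    set c : ℂ := (ε:ℂ) + (2*π*ξ : ℝ) * Complex.I with hc
    have habs2 : ‖c‖^2 = ε^2 + (2*π*ξ)^2 := by
      rw [Complex.sq_norm]
      simp [hc, Complex.normSq_apply]
      ring
    have hge : ε ≤ ‖c‖ := by
      calc ε = c.re := by simp [hc]
        _ ≤ |c.re| := le_abs_self _
        _ ≤ ‖c‖ := Complex.abs_re_le_norm c
        _ = ‖c‖ := rfl
    have hpos : (0:ℝ) < ε^2 + (2*π*ξ)^2 := by positivity
    have hpow : ε^(n-2) * (ε^2 + (2*π*ξ)^2) ≤ ‖c‖^n := by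
      rw [← habs2]
      calc ε^(n-2) * ‖c‖^2 ≤ ‖c‖^(n-2) * ‖c‖^2 := by
            apply mul_le_mul_of_nonneg_right (pow_le_pow_left₀ hε.le hge _) (by positivity)
        _ = ‖c‖^(n-2+2) := (pow_add _ _ _).symm
        _ = ‖c‖^n := by rw [show n-2+2 = n by omega]
    rw [norm_inv, norm_pow]
    calc (‖c‖^n)⁻¹ ≤ (ε^(n-2) * (ε^2 + (2*π*ξ)^2))⁻¹ := by
          apply inv_anti₀ (by positivity) hpow
      _ = (ε^(n-2))⁻¹ * (ε^2 + (2*π*ξ)^2)⁻¹ := mul_inv _ _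
  have hFfi : Integrable (𝓕 f) := by
    refine hGi.congr (Filter.Eventually.of_forall fun ξ => (hFf ξ).symm)
  -- Fourier inversion
  have hinv := hcont.fourierInv_fourier_eq hfi hFfi
  have hinv_t : (∫ ξ : ℝ, Complex.exp ((2*π*(ξ*t) : ℝ) * Complex.I) •
      (((ε:ℂ) + (2*π*ξ : ℝ) * Complex.I)^n)⁻¹) = f t := by
    have := congrFun hinv t
    rw [Real.fourierInv_eq'] at this
    rw [← this]
    apply integral_congr_ae
    filter_upwards with ξ
    rw [hFf ξ]
    norm_num [RCLike.inner_apply]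
    left
    ring_nf
  -- substitution s = 2πξ and conclusion
  set g : ℝ → ℂ := fun s : ℝ => Complex.exp (((ε : ℂ) + (s : ℂ) * Complex.I) * (t : ℂ)) *
    ((ε : ℂ) + (s : ℂ) * Complex.I) ^ (-(n : ℤ)) with hg
  have h2π : (0:ℝ) < 2*π := by positivity
  have key : (∫ s : ℝ, g s) = (2*π:ℝ) • (Complex.exp ((ε*t : ℝ)) * f t) := by
    have h1 : (fun x : ℝ => g ((2*π) * x)) = fun x : ℝ =>
        Complex.exp ((ε*t : ℝ)) * (Complex.exp (((2*π*(x*t) : ℝ) : ℂ) * Complex.I) •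
          (((ε:ℂ) + ((2*π*x : ℝ) : ℂ) * Complex.I)^n)⁻¹) := by
      funext x
      rw [hg]
      have hc0 : ((ε:ℂ) + ((2*π*x : ℝ) : ℂ) * Complex.I) ≠ 0 := by
        intro h
        have h2 : ((ε:ℂ) + ((2*π*x : ℝ) : ℂ) * Complex.I).re = ε := by simp
        rw [h] at h2
        simp at h2
        exact hε.ne' h2.symm
      simp only [smul_eq_mul]
      rw [zpow_neg, zpow_natCast]
      push_cast
      rw [show ((ε:ℂ) + 2*π*x*Complex.I) * t = (ε*t : ℂ) + (2*π*(x*t) : ℂ) * Complex.I by ring,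
        Complex.exp_add]
      ring
    have h2 := MeasureTheory.Measure.integral_comp_mul_left g (2*π)
    rw [h1, MeasureTheory.integral_const_mul, hinv_t] at h2
    rw [abs_of_pos (by positivity : (0:ℝ) < (2*π)⁻¹)] at h2
    rw [h2, smul_smul, mul_inv_cancel₀ h2π.ne', one_smul]
  rw [show (∫ s : ℝ, Complex.exp (((ε : ℂ) + (s : ℂ) * Complex.I) * (t : ℂ)) *
          ((ε : ℂ) + (s : ℂ) * Complex.I) ^ (-(n : ℤ))) = ∫ s : ℝ, g s from rfl, key]
  rw [Complex.real_smul]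
  push_cast
  rw [show (1 / (2 * (π:ℂ))) * ((2*π:ℂ) * (Complex.exp ((ε:ℂ)*(t:ℂ)) * f t))
      = Complex.exp ((ε:ℂ)*(t:ℂ)) * f t by
    rw [div_mul_eq_mul_div, one_mul]
    exact mul_div_cancel_left₀ _ (by simp [Real.pi_ne_zero] : (2*(π:ℂ)) ≠ 0)]
  by_cases ht : 0 < t
  · rw [if_pos ht, hf]
    simp only [if_pos ht]
    rw [show Complex.exp ((ε:ℂ)*(t:ℂ)) * ((t:ℂ)^(n-1) * Complex.exp (-((ε:ℂ)*(t:ℂ))) / k)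
        = (t:ℂ)^(n-1) * (Complex.exp ((ε:ℂ)*(t:ℂ)) * Complex.exp (-((ε:ℂ)*(t:ℂ)))) / k by ring]
    rw [← Complex.exp_add, add_neg_cancel, Complex.exp_zero, mul_one, hk]
  · rw [if_neg ht, hf]
    simp only [if_neg ht, mul_zero]
end
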